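/- Let f be a graph invariant with values in a commutative ring R satisfying the deletion-contraction relation f(G) = A·f(G/e) + B·f(G−e) for e neither a loop nor an isthmus, f(H·K) = C·f(H)·f(K), f(T₁) = D, and f(L₁) = E. Then for the cycle graph Pₙ with n edges (n ≥ 1), (A − C·D)·f(Pₙ) = A^{n−1}·E·(A − C·D) + B·D·(A^{n−1} − (C·D)^{n−1}). -/

import Mathlib

/-!
Induct on `n`; `P₁ = L₁`. For `n ≥ 2` take any edge `e` of `Pₙ`. It is not a loop, and it is not
an isthmus because all degrees are even, so deletion–contraction applies: `Pₙ / e` is `Pₙ₋₁` and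
`Pₙ − e` is a tree with `n − 1` edges. Splitting off a leaf writes a tree with `k + 1` edges as the
one-point union of a tree with `k` edges and `T₁`, so its value is `D (C D)^k`. Multiplying the
recursion by `A − C D` then closes the induction.
-/

/-- A finite multigraph (loops and parallel edges allowed), with a chosen
orientation of each edge given by source and target maps. -/
structure Multigraph where
  V : Type
  E : Type
  [fintypeV : Fintype V]
  [fintypeE : Fintype E]
  [decEqV : DecidableEq V]
  [decEqE : DecidableEq E]
  src : E → V
  tgt : E → V

attribute [instance] Multigraph.fintypeV Multigraph.fintypeE
  Multigraph.decEqV Multigraph.decEqE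

namespace Multigraph

variable (G : Multigraph)

/-- Two vertices are directly joined by an edge of the spanning subgraph `[G:S]`. -/
def connRel (S : Finset G.E) (a b : G.V) : Prop :=
  ∃ e ∈ S, (G.src e = a ∧ G.tgt e = b)

/-- The "same connected component of `[G:S]`" equivalence relation. -/
def connSetoid (S : Finset G.E) : Setoid G.V := Relation.EqvGen.setoid (G.connRel S)

/-- The set of connected components of the spanning subgraph `[G:S]`. -/
def Comp (S : Finset G.E) : Type := Quotient (G.connSetoid S)

noncomputable instance (S : Finset G.E) : Fintype (G.Comp S) := by
  classical exact Quotient.fintype _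

noncomputable instance (S : Finset G.E) : DecidableEq (G.Comp S) :=
  Classical.decEq _

/-- `b₀([G:S])`: the number of connected components of the spanning subgraph `[G:S]`. -/
noncomputable def b0 (S : Finset G.E) : ℕ := Fintype.card (G.Comp S)

/-- The simplicial boundary map `ℚ^S → ℚ^V`, sending an edge to (target − source). -/
noncomputable def boundary (S : Finset G.E) : ((↥S) → ℚ) →ₗ[ℚ] (G.V → ℚ) :=
  ∑ e : ↥S, LinearMap.smulRight (LinearMap.proj e)
    (fun v => (if G.tgt e.1 = v then (1 : ℚ) else 0) - (if G.src e.1 = v then 1 else 0))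

/-- `b₁([G:S])`: the first Betti number of `[G:S]`, i.e. the rank of its cycle space. -/
noncomputable def b1 (S : Finset G.E) : ℕ :=
  Module.finrank ℚ (LinearMap.ker (G.boundary S))

end Multigraph

namespace Multigraph

variable (G : Multigraph)

/-- The graph `G − e` obtained by deleting the edge `e`. -/
def deleteEdge (e : G.E) : Multigraph where
  V := G.V
  E := {e' : G.E // e' ≠ e}
  src := fun x => G.src x.1
  tgt := fun x => G.tgt x.1

/-- The equivalence relation identifying the two endpoints of `e`. -/
def contractSetoid (e : G.E) : Setoid G.V :=
  Relation.EqvGen.setoid (fun a b => a = G.src e ∧ b = G.tgt e)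

/-- The graph `G / e` obtained by contracting the edge `e` to a vertex. -/
noncomputable def contractEdge (e : G.E) : Multigraph where
  V := Quotient (G.contractSetoid e)
  E := {e' : G.E // e' ≠ e}
  fintypeV := by classical exact Quotient.fintype _
  decEqV := Classical.decEq _
  src := fun x => Quotient.mk (G.contractSetoid e) (G.src x.1)
  tgt := fun x => Quotient.mk (G.contractSetoid e) (G.tgt x.1)

/-- The number of connected components of `G`. -/
noncomputable def b0full : ℕ := G.b0 Finset.univ

/-- `G` is connected. -/
def Connected : Prop := G.b0full = 1

/-- `e` is a loop: it joins a vertex to itself. -/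
def IsLoop (e : G.E) : Prop := G.src e = G.tgt e

/-- `e` is an isthmus: deleting it increases the number of connected components. -/
noncomputable def IsIsthmus (e : G.E) : Prop := (G.deleteEdge e).b0full ≠ G.b0full

/-- `G` is a tree: connected and acyclic (`|E| + 1 = |V|`). -/
def IsTree : Prop := G.Connected ∧ Fintype.card G.E + 1 = Fintype.card G.V

/-- The degree of a vertex (loops counted twice). -/
def degree (v : G.V) : ℕ :=
  (Finset.univ.filter (fun e => G.src e = v)).card +
    (Finset.univ.filter (fun e => G.tgt e = v)).card

/-- `G` is a simple cycle with `n` vertices and `n` edges. -/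
def IsCycle (n : ℕ) : Prop :=
  G.Connected ∧ Fintype.card G.V = n ∧ Fintype.card G.E = n ∧ ∀ v, G.degree v = 2

/-- The one-point union `H·K`, obtained from the disjoint union of `H` and `K`
by identifying the vertex `h` of `H` with the vertex `k` of `K`. -/
def wedge (H K : Multigraph) (h : H.V) (k : K.V) : Multigraph where
  V := H.V ⊕ {v : K.V // v ≠ k}
  E := H.E ⊕ K.E
  src := Sum.elim (fun e => Sum.inl (H.src e))
    (fun e => if hv : K.src e = k then Sum.inl h else Sum.inr ⟨K.src e, hv⟩)
  tgt := Sum.elim (fun e => Sum.inl (H.tgt e))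
    (fun e => if hv : K.tgt e = k then Sum.inl h else Sum.inr ⟨K.tgt e, hv⟩)

/-- Isomorphism of multigraphs (edges may be matched with either orientation). -/
def Iso (H : Multigraph) : Prop :=
  ∃ (φ : G.V ≃ H.V) (ψ : G.E ≃ H.E), ∀ e : G.E,
    (H.src (ψ e) = φ (G.src e) ∧ H.tgt (ψ e) = φ (G.tgt e)) ∨
    (H.src (ψ e) = φ (G.tgt e) ∧ H.tgt (ψ e) = φ (G.src e))

end Multigraph

lemma Fintype.card_subtype_ne {α : Type*} [Fintype α] [DecidableEq α] (a : α) :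
    Fintype.card {x : α // x ≠ a} = Fintype.card α - 1 := by
  rw [Fintype.card_subtype_compl, Fintype.card_subtype_eq]

namespace Multigraph

variable {G H T : Multigraph}

def inc (G : Multigraph) (x : G.E) (v : G.V) : ℕ :=
  (if G.src x = v then 1 else 0) + (if G.tgt x = v then 1 else 0)

lemma degree_eq_sum_inc (v : G.V) : G.degree v = ∑ x, G.inc x v := by
  simp only [degree, inc, Finset.sum_add_distrib, Finset.sum_boole, Nat.cast_id]

lemma inc_eq_zero_iff {x : G.E} {v : G.V} : G.inc x v = 0 ↔ G.src x ≠ v ∧ G.tgt x ≠ v := by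
  simp [inc]

lemma inc_le_degree (x : G.E) (v : G.V) : G.inc x v ≤ G.degree v := by
  rw [degree_eq_sum_inc]
  exact Finset.single_le_sum (f := (G.inc · v)) (fun _ _ => Nat.zero_le _) (Finset.mem_univ x)

lemma inc_add_inc_le_degree {x y : G.E} (hxy : x ≠ y) (v : G.V) :
    G.inc x v + G.inc y v ≤ G.degree v := by
  have := Finset.sum_le_sum_of_subset (f := (G.inc · v)) (Finset.subset_univ {x, y})
  rwa [Finset.sum_pair hxy, ← degree_eq_sum_inc] at this

lemma degree_deleteEdge (e : G.E) (v : G.V) :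
    (G.deleteEdge e).degree v = ∑ x : {x // x ≠ e}, G.inc x v :=
  degree_eq_sum_inc (G := G.deleteEdge e) v

lemma degree_deleteEdge_add_inc (e : G.E) (v : G.V) :
    (G.deleteEdge e).degree v + G.inc e v = G.degree v := by
  rw [degree_deleteEdge, degree_eq_sum_inc, Fintype.sum_eq_add_sum_subtype_ne _ e, add_comm]

lemma sum_inc (s : Finset G.V) (x : G.E) :
    ∑ v ∈ s, G.inc x v = (if G.src x ∈ s then 1 else 0) + (if G.tgt x ∈ s then 1 else 0) := by
  simp only [inc, Finset.sum_add_distrib, Finset.sum_ite_eq]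

lemma sum_degree : ∑ v, G.degree v = 2 * Fintype.card G.E := by
  simp only [degree_eq_sum_inc]
  rw [Finset.sum_comm]
  simp [sum_inc, mul_comm]

lemma even_sum_degree_of_closed (s : Finset G.V) (hs : ∀ x, G.src x ∈ s ↔ G.tgt x ∈ s) :
    Even (∑ v ∈ s, G.degree v) := by
  simp only [degree_eq_sum_inc]
  rw [Finset.sum_comm]
  refine Finset.even_sum _ fun x _ => ?_
  simp only [sum_inc, hs x]
  exact ⟨_, rfl⟩

def Reachable (G : Multigraph) : G.V → G.V → Prop :=
  Relation.EqvGen (G.connRel Finset.univ)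

lemma Reachable.refl (a : G.V) : G.Reachable a a := Relation.EqvGen.refl a

lemma Reachable.symm {a b : G.V} (h : G.Reachable a b) : G.Reachable b a :=
  Relation.EqvGen.symm a b h

lemma Reachable.trans {a b c : G.V} (h₁ : G.Reachable a b) (h₂ : G.Reachable b c) :
    G.Reachable a c :=
  Relation.EqvGen.trans a b c h₁ h₂

lemma reachable_src_tgt (x : G.E) : G.Reachable (G.src x) (G.tgt x) :=
  .rel _ _ ⟨x, Finset.mem_univ _, rfl, rfl⟩

lemma connected_iff : G.Connected ↔ Nonempty G.V ∧ ∀ a b : G.V, G.Reachable a b := by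
  rw [Connected, b0full, b0, Fintype.card_eq_one_iff]
  constructor
  · rintro ⟨q, hq⟩
    obtain ⟨v, rfl⟩ := Quotient.exists_rep q
    exact ⟨⟨v⟩, fun a b => Quotient.exact ((hq _).trans (hq _).symm)⟩
  · rintro ⟨⟨v⟩, h⟩
    exact ⟨Quotient.mk _ v, Quotient.ind fun a => Quotient.sound (h a v)⟩

lemma Reachable.mem_iff {s : Set G.V} (hs : ∀ x, G.src x ∈ s ↔ G.tgt x ∈ s) {a b : G.V}
    (h : G.Reachable a b) : a ∈ s ↔ b ∈ s := by
  induction h with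
  | rel a b hab => obtain ⟨x, -, rfl, rfl⟩ := hab; exact hs x
  | refl => exact Iff.rfl
  | symm _ _ _ ih => exact ih.symm
  | trans _ _ _ _ _ ih₁ ih₂ => exact ih₁.trans ih₂

lemma Reachable.map (φ : G.V → H.V) (hφ : ∀ x, H.Reachable (φ (G.src x)) (φ (G.tgt x)))
    {a b : G.V} (h : G.Reachable a b) : H.Reachable (φ a) (φ b) := by
  induction h with
  | rel a b hab => obtain ⟨x, -, rfl, rfl⟩ := hab; exact hφ x
  | refl => exact .refl _
  | symm _ _ _ ih => exact ih.symm
  | trans _ _ _ _ _ ih₁ ih₂ => exact ih₁.trans ih₂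

lemma Connected.of_surjective (hG : G.Connected) {φ : G.V → H.V}
    (hsurj : Function.Surjective φ) (hφ : ∀ x, H.Reachable (φ (G.src x)) (φ (G.tgt x))) :
    H.Connected := by
  obtain ⟨⟨v⟩, hreach⟩ := connected_iff.mp hG
  refine connected_iff.mpr ⟨⟨φ v⟩, fun a b => ?_⟩
  obtain ⟨a, rfl⟩ := hsurj a
  obtain ⟨b, rfl⟩ := hsurj b
  exact (hreach a b).map φ hφ

lemma Connected.exists_inc_eq_one (hG : G.Connected) (hV : 2 ≤ Fintype.card G.V) (v : G.V) :
    ∃ x, G.inc x v = 1 := by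
  by_contra! h
  have hclosed : ∀ x, G.src x ∈ ({v} : Set G.V) ↔ G.tgt x ∈ ({v} : Set G.V) := by
    intro x
    have := h x
    simp only [inc, Set.mem_singleton_iff] at this ⊢
    split_ifs at this <;> simp_all
  obtain ⟨w, hw⟩ := Fintype.exists_ne_of_one_lt_card hV v
  exact hw (((connected_iff.mp hG).2 w v).mem_iff hclosed |>.mpr rfl)

lemma Connected.degree_pos (hG : G.Connected) (hV : 2 ≤ Fintype.card G.V) (v : G.V) :
    0 < G.degree v := by
  obtain ⟨x, hx⟩ := hG.exists_inc_eq_one hV v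
  have := inc_le_degree x v
  omega

lemma Connected.three_le_degree_of_isLoop (hG : G.Connected) (hV : 2 ≤ Fintype.card G.V)
    {e : G.E} (he : G.IsLoop e) : 3 ≤ G.degree (G.src e) := by
  obtain ⟨x, hx⟩ := hG.exists_inc_eq_one hV (G.src e)
  have hinc : G.inc e (G.src e) = 2 := by simp [inc, he.symm]
  have hxe : x ≠ e := by rintro rfl; omega
  have := inc_add_inc_le_degree hxe (G.src e)
  omega

/-- If `tgt e` were not reachable, the component of `src e` in `G − e` would have odd degree sum:
one less than its degree sum in `G`. -/
lemma reachable_deleteEdge_of_even_degree (hdeg : ∀ v, Even (G.degree v)) (e : G.E) :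
    (G.deleteEdge e).Reachable (G.src e) (G.tgt e) := by
  classical
  by_contra hne
  set s : Finset G.V := {w | (G.deleteEdge e).Reachable (G.src e) w}
  have hmem : ∀ w, w ∈ s ↔ (G.deleteEdge e).Reachable (G.src e) w := by simp [s]
  have hsrc : G.src e ∈ s := (hmem _).mpr (Reachable.refl _)
  have htgt : G.tgt e ∉ s := fun h => hne ((hmem _).mp h)
  have hclosed : ∀ x : {x // x ≠ e}, G.src x.1 ∈ s ↔ G.tgt x.1 ∈ s := fun x => by
    simp only [hmem]
    have hx := reachable_src_tgt (G := G.deleteEdge e) x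
    exact ⟨fun h => h.trans hx, fun h => h.trans hx.symm⟩
  have hsum : ∑ v ∈ s, G.degree v = ∑ v ∈ s, (G.deleteEdge e).degree v + 1 := by
    calc ∑ v ∈ s, G.degree v = ∑ v ∈ s, ((G.deleteEdge e).degree v + G.inc e v) :=
          Finset.sum_congr rfl fun v _ => (degree_deleteEdge_add_inc e v).symm
      _ = _ := by
        rw [Finset.sum_add_distrib (f := fun v : G.V => (G.deleteEdge e).degree v), sum_inc,
          if_pos hsrc, if_neg htgt]
  have hodd := Finset.even_sum (s := s) G.degree fun v _ => hdeg v
  rw [hsum, Nat.even_add_one] at hodd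
  exact hodd (even_sum_degree_of_closed (G := G.deleteEdge e) s hclosed)

lemma Connected.deleteEdge (hG : G.Connected) (hdeg : ∀ v, Even (G.degree v)) (e : G.E) :
    (G.deleteEdge e).Connected := by
  refine hG.of_surjective (H := G.deleteEdge e) (φ := id) Function.surjective_id fun x => ?_
  by_cases hx : x = e
  · subst hx
    exact reachable_deleteEdge_of_even_degree hdeg x
  · exact reachable_src_tgt (G := G.deleteEdge e) ⟨x, hx⟩

section Contraction

variable {e : G.E}

def contractProj (e : G.E) : G.V → (G.contractEdge e).V := Quotient.mk (G.contractSetoid e)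

lemma contractEdge_src (x : {x // x ≠ e}) :
    (G.contractEdge e).src x = G.contractProj e (G.src x.1) := rfl

lemma contractEdge_tgt (x : {x // x ≠ e}) :
    (G.contractEdge e).tgt x = G.contractProj e (G.tgt x.1) := rfl

lemma contractProj_surjective : Function.Surjective (G.contractProj e) := Quotient.mk_surjective

lemma contractProj_eq_iff {a b : G.V} :
    G.contractProj e a = G.contractProj e b ↔
      a = b ∨ ((a = G.src e ∨ a = G.tgt e) ∧ (b = G.src e ∨ b = G.tgt e)) := by
  refine Quotient.eq.trans ⟨fun h => ?_, ?_⟩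
  · induction h with
    | rel a b hab => exact .inr ⟨.inl hab.1, .inr hab.2⟩
    | refl => exact .inl rfl
    | symm _ _ _ ih => tauto
    | trans _ _ _ _ _ ih₁ ih₂ =>
      rcases ih₁ with rfl | ih₁
      · exact ih₂
      · rcases ih₂ with rfl | ih₂
        · exact .inr ih₁
        · exact .inr ⟨ih₁.1, ih₂.2⟩
  · have hsrc : ∀ c, c = G.src e ∨ c = G.tgt e → G.contractSetoid e c (G.src e) := by
      rintro c (rfl | rfl)
      · exact Relation.EqvGen.refl _
      · exact Relation.EqvGen.symm _ _ (Relation.EqvGen.rel _ _ ⟨rfl, rfl⟩)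
    rintro (rfl | ⟨ha, hb⟩)
    · exact Relation.EqvGen.refl _
    · exact Relation.EqvGen.trans _ _ _ (hsrc a ha) (Relation.EqvGen.symm _ _ (hsrc b hb))

lemma contractProj_src_eq_tgt : G.contractProj e (G.src e) = G.contractProj e (G.tgt e) :=
  contractProj_eq_iff.mpr (.inr ⟨.inl rfl, .inr rfl⟩)

lemma card_contractEdge_V (he : ¬ G.IsLoop e) :
    Fintype.card (G.contractEdge e).V = Fintype.card G.V - 1 := by
  have hbij : Function.Bijective fun w : {w // w ≠ G.tgt e} => G.contractProj e w := by
    refine ⟨fun a b hab => Subtype.ext ?_, fun q => ?_⟩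
    · have := a.2
      have := b.2
      have := contractProj_eq_iff.mp hab
      grind
    · obtain ⟨w, rfl⟩ := contractProj_surjective q
      by_cases hw : w = G.tgt e
      · exact ⟨⟨G.src e, he⟩, hw ▸ contractProj_src_eq_tgt (e := e)⟩
      · exact ⟨⟨w, hw⟩, rfl⟩
  rw [← Fintype.card_of_bijective hbij, Fintype.card_subtype_ne]

lemma card_contractEdge_E : Fintype.card (G.contractEdge e).E = Fintype.card G.E - 1 :=
  Fintype.card_subtype_ne e

lemma card_deleteEdge_E : Fintype.card (G.deleteEdge e).E = Fintype.card G.E - 1 :=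
  Fintype.card_subtype_ne e

lemma Connected.contractEdge (hG : G.Connected) : (G.contractEdge e).Connected := by
  refine hG.of_surjective contractProj_surjective fun x => ?_
  by_cases hx : x = e
  · subst hx
    rw [contractProj_src_eq_tgt]
    exact Reachable.refl _
  · exact reachable_src_tgt (G := G.contractEdge e) ⟨x, hx⟩

lemma inc_contractEdge_contractProj {w : G.V} (hws : w ≠ G.src e) (hwt : w ≠ G.tgt e)
    (x : {x // x ≠ e}) :
    (G.contractEdge e).inc x (G.contractProj e w) = G.inc x.1 w := by
  have key : ∀ a, G.contractProj e a = G.contractProj e w ↔ a = w := fun a => by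
    rw [contractProj_eq_iff]
    tauto
  unfold inc
  split_ifs <;> simp_all [contractEdge_src, contractEdge_tgt]

lemma inc_contractEdge_contractProj_src (he : ¬ G.IsLoop e) (x : {x // x ≠ e}) :
    (G.contractEdge e).inc x (G.contractProj e (G.src e)) =
      G.inc x.1 (G.src e) + G.inc x.1 (G.tgt e) := by
  have hst : G.src e ≠ G.tgt e := he
  unfold inc
  split_ifs <;> simp_all [contractEdge_src, contractEdge_tgt, contractProj_eq_iff]

lemma degree_contractEdge_contractProj {w : G.V} (hws : w ≠ G.src e) (hwt : w ≠ G.tgt e) :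
    (G.contractEdge e).degree (G.contractProj e w) = (G.deleteEdge e).degree w := by
  rw [degree_eq_sum_inc, degree_deleteEdge]
  exact Finset.sum_congr rfl fun x _ => inc_contractEdge_contractProj hws hwt x

lemma degree_contractEdge_contractProj_src (he : ¬ G.IsLoop e) :
    (G.contractEdge e).degree (G.contractProj e (G.src e)) =
      (G.deleteEdge e).degree (G.src e) + (G.deleteEdge e).degree (G.tgt e) := by
  rw [degree_eq_sum_inc, degree_deleteEdge, degree_deleteEdge, ← Finset.sum_add_distrib]
  exact Finset.sum_congr rfl fun x _ => inc_contractEdge_contractProj_src he x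

end Contraction

def singleEdge : Multigraph where
  V := Bool
  E := Unit
  src _ := false
  tgt _ := true

/-- Retracting `v` onto `u` lets `removeLeaf` be defined without a proof that the remaining edges
avoid `v`. -/
def leafRetract (v u : T.V) (hu : u ≠ v) (w : T.V) : {w // w ≠ v} :=
  if h : w = v then ⟨u, hu⟩ else ⟨w, h⟩

def removeLeaf (v : T.V) (e : T.E) (u : T.V) (hu : u ≠ v) : Multigraph where
  V := {w // w ≠ v}
  E := {x // x ≠ e}
  src x := leafRetract v u hu (T.src x.1)
  tgt x := leafRetract v u hu (T.tgt x.1)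

lemma card_removeLeaf_V {v u : T.V} {e : T.E} (hu : u ≠ v) :
    Fintype.card (T.removeLeaf v e u hu).V = Fintype.card T.V - 1 :=
  Fintype.card_subtype_ne v

lemma card_removeLeaf_E {v u : T.V} {e : T.E} (hu : u ≠ v) :
    Fintype.card (T.removeLeaf v e u hu).E = Fintype.card T.E - 1 :=
  Fintype.card_subtype_ne e

lemma leafRetract_self {v u : T.V} (hu : u ≠ v) : leafRetract v u hu v = ⟨u, hu⟩ :=
  dif_pos rfl

lemma leafRetract_of_ne {v u : T.V} (hu : u ≠ v) {w : T.V} (hw : w ≠ v) :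
    leafRetract v u hu w = ⟨w, hw⟩ :=
  dif_neg hw

lemma iso_wedge_removeLeaf {v u : T.V} {e : T.E} (hu : u ≠ v)
    (hends : (T.src e = v ∧ T.tgt e = u) ∨ (T.src e = u ∧ T.tgt e = v))
    (hpend : ∀ x ≠ e, T.src x ≠ v ∧ T.tgt x ≠ v) :
    T.Iso (wedge (T.removeLeaf v e u hu) singleEdge ⟨u, hu⟩ false) := by
  have htrue : (true : singleEdge.V) ≠ false := Bool.noConfusion
  let W := wedge (T.removeLeaf v e u hu) singleEdge ⟨u, hu⟩ false
  let φ : T.V ≃ W.V :=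
    { toFun w := if h : w = v then Sum.inr ⟨true, htrue⟩ else Sum.inl ⟨w, h⟩
      invFun := Sum.elim Subtype.val fun _ => v
      left_inv w := by by_cases h : w = v <;> simp [h] <;> rfl
      right_inv := by
        rintro (⟨w, hw⟩ | ⟨_ | _, hb⟩)
        · exact dif_neg hw
        · exact absurd rfl hb
        · exact dif_pos rfl }
  let ψ : T.E ≃ W.E :=
    { toFun x := if h : x = e then Sum.inr () else Sum.inl ⟨x, h⟩
      invFun := Sum.elim Subtype.val fun _ => e
      left_inv x := by by_cases h : x = e <;> simp [h] <;> rfl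
      right_inv := by
        rintro (⟨x, hx⟩ | ⟨⟩)
        · exact dif_neg hx
        · exact dif_pos rfl }
  have hφv : φ v = Sum.inr ⟨true, htrue⟩ := dif_pos rfl
  have hφ : ∀ w (hw : w ≠ v), φ w = Sum.inl ⟨w, hw⟩ := fun w hw => dif_neg hw
  have hψe : ψ e = Sum.inr () := dif_pos rfl
  refine ⟨φ, ψ, fun x => ?_⟩
  by_cases hx : x = e
  · subst hx
    rcases hends with ⟨hs, ht⟩ | ⟨hs, ht⟩ <;> [right; left] <;>
      · rw [hψe, hs, ht, hφv, hφ u hu]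
        exact ⟨rfl, rfl⟩
  · obtain ⟨hs, ht⟩ := hpend x hx
    left
    rw [show ψ x = Sum.inl ⟨x, hx⟩ from dif_neg hx, hφ _ hs, hφ _ ht]
    exact ⟨congrArg Sum.inl (leafRetract_of_ne hu hs), congrArg Sum.inl (leafRetract_of_ne hu ht)⟩

lemma exists_pendant_edge {v : G.V} (hv : G.degree v = 1) :
    ∃ (e : G.E) (u : G.V) (_ : u ≠ v),
      ((G.src e = v ∧ G.tgt e = u) ∨ (G.src e = u ∧ G.tgt e = v)) ∧
        ∀ x ≠ e, G.src x ≠ v ∧ G.tgt x ≠ v := by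
  obtain ⟨e, -, he⟩ := Finset.exists_ne_zero_of_sum_ne_zero
    (show ∑ x, G.inc x v ≠ 0 by rw [← degree_eq_sum_inc]; omega)
  have hpend : ∀ x ≠ e, G.src x ≠ v ∧ G.tgt x ≠ v := fun x hx => by
    have := inc_add_inc_le_degree hx v
    exact inc_eq_zero_iff.mp (by omega)
  have he1 : G.inc e v = 1 := by
    have := inc_le_degree e v
    omega
  by_cases hs : G.src e = v
  · have ht : G.tgt e ≠ v := by simp_all [inc]
    exact ⟨e, G.tgt e, ht, .inl ⟨hs, rfl⟩, hpend⟩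
  · have ht : G.tgt e = v := by simp_all [inc]
    exact ⟨e, G.src e, hs, .inr ⟨rfl, ht⟩, hpend⟩

lemma IsTree.exists_degree_eq_one (hT : T.IsTree) (hV : 2 ≤ Fintype.card T.V) :
    ∃ v, T.degree v = 1 := by
  by_contra! h
  have h2 : ∀ v ∈ Finset.univ, 2 ≤ T.degree v := fun v _ => by
    have := hT.1.degree_pos hV v
    have := h v
    omega
  have := Finset.card_nsmul_le_sum _ _ _ h2
  rw [sum_degree, Finset.card_univ, smul_eq_mul] at this
  have := hT.2
  omega

lemma IsTree.removeLeaf (hT : T.IsTree) {v u : T.V} {e : T.E} (hu : u ≠ v)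
    (hends : (T.src e = v ∧ T.tgt e = u) ∨ (T.src e = u ∧ T.tgt e = v)) :
    (T.removeLeaf v e u hu).IsTree := by
  have hretract : leafRetract v u hu (T.src e) = leafRetract v u hu (T.tgt e) := by
    rcases hends with ⟨hs, ht⟩ | ⟨hs, ht⟩ <;> rw [hs, ht, leafRetract_self, leafRetract_of_ne hu hu]
  refine ⟨hT.1.of_surjective (φ := leafRetract v u hu)
      (fun w => ⟨w.1, leafRetract_of_ne hu w.2⟩) fun x => ?_, ?_⟩
  · by_cases hx : x = e
    · subst hx
      rw [hretract]
      exact Reachable.refl _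
    · exact reachable_src_tgt (G := T.removeLeaf v e u hu) ⟨x, hx⟩
  · rw [card_removeLeaf_E, card_removeLeaf_V, ← hT.2]
    have : 0 < Fintype.card T.E := Fintype.card_pos_iff.mpr ⟨e⟩
    omega

theorem apply_eq_of_isTree {R : Type} [CommRing R] {C D : R} {f : Multigraph → R}
    (hiso : ∀ G H : Multigraph, G.Iso H → f G = f H)
    (hwedge : ∀ (H K : Multigraph) (h : H.V) (k : K.V), f (wedge H K h k) = C * f H * f K)
    (hT1 : ∀ G : Multigraph, Fintype.card G.V = 2 → Fintype.card G.E = 1 →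
      (∀ e, ¬ G.IsLoop e) → f G = D)
    (k : ℕ) {T : Multigraph} (hT : T.IsTree) (hE : Fintype.card T.E = k + 1) :
    f T = D * (C * D) ^ k := by
  have hV : Fintype.card T.V = k + 2 := by rw [← hT.2, hE]
  induction k generalizing T with
  | zero =>
    refine (hT1 T hV hE fun x hx => ?_).trans (by ring)
    have h3 := hT.1.three_le_degree_of_isLoop (by omega) hx
    have h2 := Finset.single_le_sum (fun v _ => Nat.zero_le (T.degree v))
      (Finset.mem_univ (T.src x))
    rw [sum_degree, hE] at h2
    omega
  | succ k ih =>
    obtain ⟨v, hv⟩ := hT.exists_degree_eq_one (by omega)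
    obtain ⟨e, u, hu, hends, hpend⟩ := exists_pendant_edge hv
    have hT' := hT.removeLeaf hu hends
    have hE' : Fintype.card (T.removeLeaf v e u hu).E = k + 1 := by
      rw [card_removeLeaf_E, hE]
      rfl
    have hsingle : f singleEdge = D := hT1 _ rfl rfl fun _ h => Bool.noConfusion h
    calc f T = f (wedge (T.removeLeaf v e u hu) singleEdge ⟨u, hu⟩ false) :=
          hiso _ _ (iso_wedge_removeLeaf hu hends hpend)
      _ = C * f (T.removeLeaf v e u hu) * f singleEdge := hwedge _ _ _ _
      _ = D * (C * D) ^ (k + 1) := by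
        rw [ih hT' hE' (by rw [← hT'.2, hE']), hsingle]
        ring

section Cycle

variable {n : ℕ}

lemma IsCycle.not_isLoop (hG : G.IsCycle (n + 2)) (e : G.E) : ¬ G.IsLoop e := fun he => by
  have := hG.1.three_le_degree_of_isLoop (by rw [hG.2.1]; omega) he
  rw [hG.2.2.2] at this
  omega

lemma IsCycle.connected_deleteEdge (hG : G.IsCycle n) (e : G.E) : (G.deleteEdge e).Connected :=
  hG.1.deleteEdge (fun v => hG.2.2.2 v ▸ even_two) e

lemma IsCycle.not_isIsthmus (hG : G.IsCycle n) (e : G.E) : ¬ G.IsIsthmus e :=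
  fun h => h ((hG.connected_deleteEdge e).trans hG.1.symm)

lemma IsCycle.isTree_deleteEdge (hG : G.IsCycle n) (e : G.E) : (G.deleteEdge e).IsTree := by
  refine ⟨hG.connected_deleteEdge e, ?_⟩
  rw [card_deleteEdge_E]
  have : 0 < Fintype.card G.E := Fintype.card_pos_iff.mpr ⟨e⟩
  have := hG.2.2.1
  have := hG.2.1
  show _ = Fintype.card G.V
  omega

lemma IsCycle.contractEdge (hG : G.IsCycle (n + 2)) (e : G.E) :
    (G.contractEdge e).IsCycle (n + 1) := by
  have he := hG.not_isLoop e
  obtain ⟨hconn, hV, hE, hdeg⟩ := hG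
  have hst : G.src e ≠ G.tgt e := he
  refine ⟨hconn.contractEdge, by rw [card_contractEdge_V he, hV]; rfl,
    by rw [card_contractEdge_E, hE]; rfl, fun q => ?_⟩
  obtain ⟨w, rfl⟩ := contractProj_surjective q
  by_cases hw : w = G.src e ∨ w = G.tgt e
  · have hsrc := degree_deleteEdge_add_inc e (G.src e)
    have htgt := degree_deleteEdge_add_inc e (G.tgt e)
    rw [hdeg, show G.inc e (G.src e) = 1 by simp [inc, hst.symm]] at hsrc
    rw [hdeg, show G.inc e (G.tgt e) = 1 by simp [inc, hst]] at htgt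
    have hw' : G.contractProj e w = G.contractProj e (G.src e) := by
      rcases hw with rfl | rfl
      · rfl
      · exact contractProj_src_eq_tgt.symm
    rw [hw', degree_contractEdge_contractProj_src he]
    omega
  · obtain ⟨hws, hwt⟩ := not_or.mp hw
    have := degree_deleteEdge_add_inc e w
    rw [hdeg, inc_eq_zero_iff.mpr ⟨Ne.symm hws, Ne.symm hwt⟩] at this
    rw [degree_contractEdge_contractProj hws hwt]
    omega

end Cycle

end Multigraph

open Multigraph in
/-- For a graph invariant `f` satisfying deletion–contraction, the one-point-union
rule, `f(T₁) = D` and `f(L₁) = E`, the cycle `Pₙ` with `n ≥ 1` edges satisfies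
`(A − C·D)·f(Pₙ) = A^(n−1)·E·(A − C·D) + B·D·(A^(n−1) − (C·D)^(n−1))`. -/
theorem value_of_cycle {R : Type} [CommRing R] (A B C D E : R) (f : Multigraph → R)
    (hiso : ∀ G H : Multigraph, G.Iso H → f G = f H)
    (hdc : ∀ (G : Multigraph) (e : G.E), ¬ G.IsLoop e → ¬ G.IsIsthmus e →
      f G = A * f (G.contractEdge e) + B * f (G.deleteEdge e))
    (hwedge : ∀ (H K : Multigraph) (h : H.V) (k : K.V),
      f (Multigraph.wedge H K h k) = C * f H * f K)
    (hT1 : ∀ G : Multigraph, Fintype.card G.V = 2 → Fintype.card G.E = 1 →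
      (∀ e, ¬ G.IsLoop e) → f G = D)
    (hL1 : ∀ G : Multigraph, Fintype.card G.V = 1 → Fintype.card G.E = 1 → f G = E)
    (n : ℕ) (hn : 1 ≤ n) (G : Multigraph) (hG : G.IsCycle n) :
    (A - C * D) * f G
      = A ^ (n - 1) * E * (A - C * D) + B * D * (A ^ (n - 1) - (C * D) ^ (n - 1)) := by
  induction n, hn using Nat.le_induction generalizing G with
  | base =>
    rw [hL1 G hG.2.1 hG.2.2.1]
    ring
  | succ n hn ih =>
    obtain ⟨m, rfl⟩ : ∃ m, n = m + 1 := ⟨n - 1, by omega⟩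
    obtain ⟨e⟩ : Nonempty G.E := Fintype.card_pos_iff.mp (by rw [hG.2.2.1]; omega)
    have hsplit := hdc G e (hG.not_isLoop e) (hG.not_isIsthmus e)
    have hcontract := ih _ (hG.contractEdge e)
    have hdelete := apply_eq_of_isTree hiso hwedge hT1 m (hG.isTree_deleteEdge e)
      (by rw [card_deleteEdge_E, hG.2.2.1]; rfl)
    simp only [Nat.add_sub_cancel] at hcontract ⊢
    linear_combination (A - C * D) * hsplit + A * hcontract + B * (A - C * D) * hdelete
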